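/- Let n be a natural number and 1 ≤ k < n. Regard S_{k+1} as the subgroup {w ∈ S_n : w(x) = x for all x > k+1} of S_n. Then for every pair of permutations g, h ∈ S_n, the polynomial ∑_{w ∈ S_{k+1}} α^{n−ν(h · g w g^{−1})} ∈ ℤ[α] is divisible by the product (1+α)(1+2α)⋯(1+kα); equivalently, for any subgroup H of S_n conjugate to S_{k+1} and any h ∈ S_n, the polynomial ∑_{w ∈ H} α^{n−ν(hw)} is divisible by ∏_{j=1}^{k}(1+jα). -/

import Mathlib

/-- The number of cycles `ν(w)` of a permutation `w` of `{1,…,n}`: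
the number of orbits of `w` acting on `Fin n` (fixed points count as cycles of length 1). -/
noncomputable def permCycles {n : ℕ} (w : Equiv.Perm (Fin n)) : ℕ :=
  Nat.card (MulAction.orbitRel.Quotient (Subgroup.zpowers w) (Fin n))

/-- Membership in the subgroup `S_{k+1} = {w ∈ S_n : w(x) = x for all x > k+1}` of `S_n`
(with `Fin n` indexed from `0`, i.e. `w x = x` whenever `k+1 ≤ x`). -/
def inSymSub (n k : ℕ) (w : Equiv.Perm (Fin n)) : Prop :=
  ∀ x : Fin n, k + 1 ≤ (x : ℕ) → w x = x

instance (n k : ℕ) : DecidablePred (inSymSub n k) := by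
  unfold inSymSub; infer_instance

/-!
The polynomial `∏ (1 + jX)` is primitive, so by Gauss's lemma it suffices that the sum
vanishes at `-1/j` for `1 ≤ j ≤ k`. Since `(-1)^(n - ν(σ)) = sign σ`, this amounts to
`∑_w sign(σ_w) j^ν(σ_w) = 0` for `σ_w = h g w g⁻¹`. Here `j^ν(σ)` counts the colourings
`f : Fin n → Fin j` constant on the cycles of `σ`. For a fixed colouring `f`, pigeonhole gives
`a ≠ b` in `{0, …, k}` with `f (g a) = f (g b)`, and `w ↦ w * (a b)` is then a sign-reversing
involution on the `w ∈ S_{k+1}` for which `f` is `σ_w`-invariant.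
-/

open Equiv Equiv.Perm Finset Polynomial

section GaussLemma

lemma isPrimitive_of_isUnit_coeff_zero {R : Type*} [CommSemiring R] {p : R[X]}
    (h : IsUnit (p.coeff 0)) : p.IsPrimitive :=
  fun r hr => isUnit_of_dvd_unit ((C_dvd_iff_dvd_coeff r p).mp hr 0) h

lemma one_add_C_mul_X_eq {K : Type*} [Field K] {a : K} (ha : a ≠ 0) :
    1 + C a * X = C a * (X - C (-a⁻¹)) := by
  rw [mul_sub, ← C_mul, mul_neg, mul_inv_cancel₀ ha, C_neg, C_1]
  ring

lemma prod_one_add_C_mul_X_dvd {K ι : Type*} [Field K] {s : Finset ι} {a : ι → K}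
    (ha : Function.Injective a) (ha0 : ∀ i ∈ s, a i ≠ 0) {q : K[X]}
    (hq : ∀ i ∈ s, q.IsRoot (-(a i)⁻¹)) :
    ∏ i ∈ s, (1 + C (a i) * X) ∣ q := by
  rw [prod_congr rfl fun i hi => one_add_C_mul_X_eq (ha0 i hi), prod_mul_distrib, ← map_prod,
    (isUnit_C.mpr (isUnit_iff_ne_zero.mpr (prod_ne_zero_iff.mpr ha0))).mul_left_dvd]
  refine prod_dvd_of_coprime ?_ fun i hi => dvd_iff_isRoot.mpr (hq i hi)
  exact (pairwise_coprime_X_sub_C (neg_injective.comp (inv_injective.comp ha))).set_pairwise _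

lemma prod_one_add_natCast_mul_X_dvd {s : Finset ℕ} (hs : 0 ∉ s) {p : ℤ[X]}
    (hp : ∀ j ∈ s, (p.map (Int.castRingHom ℚ)).IsRoot (-(j : ℚ)⁻¹)) :
    ∏ j ∈ s, (1 + (j : ℤ[X]) * X) ∣ p := by
  have hprim : (∏ j ∈ s, (1 + (j : ℤ[X]) * X)).IsPrimitive :=
    isPrimitive_of_isUnit_coeff_zero (by simp [coeff_zero_eq_eval_zero, eval_prod])
  rw [IsPrimitive.Int.dvd_iff_map_cast_dvd_map_cast _ _ hprim, Polynomial.map_prod]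
  convert prod_one_add_C_mul_X_dvd Nat.cast_injective
    (fun j hj => Nat.cast_ne_zero.mpr (ne_of_mem_of_not_mem hj hs)) hp using 2 with j
  simp

end GaussLemma

section Orbits

variable {α : Type*}

lemma orbitRel_zpowers_iff_sameCycle (σ : Perm α) (x y : α) :
    MulAction.orbitRel (Subgroup.zpowers σ) α x y ↔ σ.SameCycle y x := by
  constructor
  · rintro ⟨⟨_, hu⟩, rfl⟩
    obtain ⟨i, rfl⟩ := Subgroup.mem_zpowers_iff.mp hu
    exact ⟨i, rfl⟩
  · rintro ⟨i, rfl⟩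
    exact ⟨⟨σ ^ i, Subgroup.zpow_mem_zpowers σ i⟩, rfl⟩

lemma orbitRel_zpowers_le_ker_iff [Finite α] {β : Type*} (σ : Perm α) (f : α → β) :
    MulAction.orbitRel (Subgroup.zpowers σ) α ≤ Setoid.ker f ↔ ∀ x, f (σ x) = f x := by
  refine ⟨fun h x => h ((orbitRel_zpowers_iff_sameCycle σ _ _).mpr ⟨1, rfl⟩),
    fun hf x y hxy => ?_⟩
  obtain ⟨i, rfl⟩ := ((orbitRel_zpowers_iff_sameCycle σ x y).mp hxy).exists_nat_pow_eq
  change f _ = f _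
  clear hxy
  induction i with
  | zero => rfl
  | succ i ih => rw [pow_succ', Perm.mul_apply, hf, ih]

variable [Fintype α] [DecidableEq α]

/-- The orbits of `σ` are its fixed points and the supports of its cycle factors. -/
def orbitLabel (σ : Perm α) (x : α) : Function.fixedPoints σ ⊕ σ.cycleFactorsFinset :=
  if h : σ x = x then .inl ⟨x, h⟩
  else .inr ⟨σ.cycleOf x, cycleOf_mem_cycleFactorsFinset_iff.mpr (mem_support.mpr h)⟩

lemma orbitLabel_eq_iff (σ : Perm α) (x y : α) :
    orbitLabel σ x = orbitLabel σ y ↔ σ.SameCycle x y := by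
  by_cases hx : σ x = x <;> by_cases hy : σ y = y <;> simp only [orbitLabel, hx, hy,
    dite_true, dite_false, Sum.inl.injEq, Sum.inr.injEq, reduceCtorEq, Subtype.ext_iff,
    false_iff]
  · exact ⟨fun h => h ▸ SameCycle.refl _ _, fun h => h.eq_of_left hx⟩
  · exact fun h => hy (h.apply_eq_self_iff.mp hx)
  · exact fun h => hx (h.apply_eq_self_iff.mpr hy)
  · exact (sameCycle_iff_cycleOf_eq_of_mem_support (mem_support.mpr hx)
      (mem_support.mpr hy)).symm

lemma orbitLabel_surjective (σ : Perm α) : Function.Surjective (orbitLabel σ) := by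
  rintro (⟨x, hx⟩ | ⟨c, hc⟩)
  · exact ⟨x, by simp [orbitLabel, hx.eq]⟩
  · obtain ⟨x, hxc⟩ := (mem_cycleFactorsFinset_iff.mp hc).1.nonempty_support
    have hx : σ x ≠ x := mem_support.mp (mem_cycleFactorsFinset_support_le hc hxc)
    exact ⟨x, by simp [orbitLabel, hx, cycle_is_cycleOf hxc hc]⟩

end Orbits

section PermCycles

variable {n : ℕ}

lemma permCycles_eq (σ : Perm (Fin n)) :
    permCycles σ = (n - σ.cycleType.sum) + Multiset.card σ.cycleType := by
  have e : MulAction.orbitRel.Quotient (Subgroup.zpowers σ) (Fin n) ≃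
      Function.fixedPoints σ ⊕ σ.cycleFactorsFinset :=
    (Quotient.congrRight fun x y => by
      rw [orbitRel_zpowers_iff_sameCycle, sameCycle_comm, Setoid.ker_def, orbitLabel_eq_iff]).trans
      (Setoid.quotientKerEquivOfSurjective _ (orbitLabel_surjective σ))
  rw [permCycles, Nat.card_congr e, Nat.card_sum, Nat.card_eq_fintype_card, card_fixedPoints,
    Fintype.card_fin, Nat.card_eq_fintype_card, Fintype.card_coe, cycleType_def, Multiset.card_map,
    card_val]

lemma permCycles_le (σ : Perm (Fin n)) : permCycles σ ≤ n := by
  calc permCycles σ ≤ Nat.card (Fin n) :=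
        Nat.card_le_card_of_surjective _ Quotient.mk''_surjective
    _ = n := Nat.card_eq_fintype_card.trans (Fintype.card_fin n)

lemma sign_eq_neg_one_pow_sub_permCycles (σ : Perm (Fin n)) :
    (sign σ : ℤ) = (-1) ^ (n - permCycles σ) := by
  have hle := permCycles_le σ
  have hsum := sum_cycleType_le σ
  rw [Fintype.card_fin] at hsum
  have h : σ.cycleType.sum + Multiset.card σ.cycleType =
      (n - permCycles σ) + 2 * Multiset.card σ.cycleType := by
    rw [permCycles_eq] at hle ⊢
    omega
  rw [sign_of_cycleType, h, pow_add, pow_mul]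
  simp

lemma card_invariant_colorings {β : Type*} [Fintype β] [DecidableEq β] (σ : Perm (Fin n)) :
    #{f : Fin n → β | ∀ x, f (σ x) = f x} = Fintype.card β ^ permCycles σ := by
  rw [← Fintype.card_subtype, ← Nat.card_eq_fintype_card, Nat.card_congr
    ((subtypeEquivRight fun f => (orbitRel_zpowers_le_ker_iff σ f).symm).trans
      (Setoid.liftEquiv _)), Nat.card_fun, Nat.card_eq_fintype_card, permCycles]

end PermCycles

lemma sum_sign_eq_zero_of_mul_swap_mem {α : Type*} [DecidableEq α] [Fintype α]
    {s : Finset (Perm α)} {a b : α} (hab : a ≠ b) (hs : ∀ w ∈ s, w * swap a b ∈ s) :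
    ∑ w ∈ s, (sign w : ℤ) = 0 :=
  sum_involution (fun w _ => w * swap a b) (fun w _ => by simp [sign_swap hab])
    (fun w _ _ h => hab (swap_eq_one_iff.mp (mul_eq_left.mp h))) hs
    (fun w _ => by simp [mul_assoc])

lemma apply_swap_eq_of_apply_eq {α β : Type*} [DecidableEq α] {F : α → β} {a b : α}
    (h : F a = F b) (x : α) : F (swap a b x) = F x := by
  rcases eq_or_ne x a with rfl | hxa
  · rw [swap_apply_left, h]
  rcases eq_or_ne x b with rfl | hxb
  · rw [swap_apply_right, h]
  rw [swap_apply_of_ne_of_ne hxa hxb]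

section SymSub

variable {n k : ℕ}

lemma inSymSub.mul {v w : Perm (Fin n)} (hv : inSymSub n k v) (hw : inSymSub n k w) :
    inSymSub n k (v * w) :=
  fun x hx => by rw [Perm.mul_apply, hw x hx, hv x hx]

lemma inSymSub_swap {a b : Fin n} (ha : (a : ℕ) ≤ k) (hb : (b : ℕ) ≤ k) :
    inSymSub n k (swap a b) :=
  fun x hx => swap_apply_of_ne_of_ne (by rintro rfl; omega) (by rintro rfl; omega)

lemma sum_sign_filter_invariant_eq_zero {j : ℕ} (hjk : j ≤ k) (hkn : k < n)
    (g u : Perm (Fin n)) (f : Fin n → Fin j) :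
    ∑ w ∈ univ.filter (inSymSub n k) with ∀ x, f ((u * (g * w * g⁻¹)) x) = f x,
      (sign w : ℤ) = 0 := by
  obtain ⟨i₁, i₂, hne, heq⟩ := Fintype.exists_ne_map_eq_of_card_lt
    (fun i : Fin (k + 1) => f (g (Fin.castLE hkn i))) (by simpa using Nat.lt_succ_of_le hjk)
  refine sum_sign_eq_zero_of_mul_swap_mem (fun h => hne (Fin.castLE_injective hkn h))
    fun w hw => ?_
  simp only [mem_filter, mem_univ, true_and] at hw ⊢
  refine ⟨hw.1.mul (inSymSub_swap (Nat.lt_succ_iff.mp i₁.isLt) (Nat.lt_succ_iff.mp i₂.isLt)),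
    fun x => ?_⟩
  have hfg := apply_swap_eq_of_apply_eq (F := fun y => f (g y)) heq (g⁻¹ x)
  have hwx := hw.2 (g (swap (Fin.castLE hkn i₁) (Fin.castLE hkn i₂) (g⁻¹ x)))
  simp only [Perm.mul_apply, coe_inv, symm_apply_apply, apply_symm_apply] at hwx hfg ⊢
  rw [hwx, hfg]

end SymSub

lemma sum_sign_mul_pow_permCycles_eq_zero {n k j : ℕ} (hjk : j ≤ k) (hkn : k < n)
    (g u : Perm (Fin n)) :
    ∑ w ∈ univ.filter (inSymSub n k), (sign (u * (g * w * g⁻¹)) : ℤ) *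
      (j : ℤ) ^ permCycles (u * (g * w * g⁻¹)) = 0 := by
  have hcount (σ : Perm (Fin n)) : (j : ℤ) ^ permCycles σ =
      ∑ f : Fin n → Fin j, if ∀ x, f (σ x) = f x then 1 else 0 := by
    rw [sum_boole, card_invariant_colorings, Fintype.card_fin, Nat.cast_pow]
  have hsign (w : Perm (Fin n)) : (sign (u * (g * w * g⁻¹)) : ℤ) = sign u * sign w := by
    rw [Perm.sign_mul, Perm.sign_mul, Perm.sign_mul, mul_right_comm, sign_inv,
      Int.units_mul_self, one_mul, Units.val_mul]
  simp_rw [hcount, hsign, mul_sum, mul_boole]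
  rw [sum_comm]
  refine sum_eq_zero fun f _ => ?_
  rw [← sum_filter, ← mul_sum, sum_sign_filter_invariant_eq_zero hjk hkn g u f, mul_zero]

lemma neg_inv_pow_sub_permCycles {K : Type*} [Field K] {n : ℕ} {x : K} (hx : x ≠ 0)
    (σ : Perm (Fin n)) :
    (-x⁻¹) ^ (n - permCycles σ) = x⁻¹ ^ n * ((sign σ : ℤ) * x ^ permCycles σ) := by
  rw [neg_pow, sign_eq_neg_one_pow_sub_permCycles, pow_sub₀ _ (inv_ne_zero hx) (permCycles_le σ)]
  push_cast
  rw [inv_pow x (permCycles σ), inv_inv]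
  ring

theorem stmt3_general (n k : ℕ) (hkn : k < n) (g h : Equiv.Perm (Fin n)) :
    (∏ j ∈ Finset.Icc 1 k, (1 + (j : Polynomial ℤ) * Polynomial.X)) ∣
    ∑ w ∈ Finset.univ.filter (inSymSub n k),
      (Polynomial.X : Polynomial ℤ) ^ (n - permCycles (h * (g * w * g⁻¹))) := by
  refine prod_one_add_natCast_mul_X_dvd (by simp) fun j hj => ?_
  obtain ⟨hj1, hjk⟩ := mem_Icc.mp hj
  have hj0 : (j : ℚ) ≠ 0 := by positivity
  have hvanish := sum_sign_mul_pow_permCycles_eq_zero hjk hkn g h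
  simp only [IsRoot, Polynomial.map_sum, Polynomial.map_pow, map_X, eval_finsetSum, eval_pow,
    eval_X, neg_inv_pow_sub_permCycles hj0, ← mul_sum]
  exact mul_eq_zero_of_right _ (by exact_mod_cast hvanish)

/-- For `1 ≤ k < n` and any `g, h ∈ S_n`, the polynomial
`∑_{w ∈ S_{k+1}} α^{n−ν(h·gwg⁻¹)} ∈ ℤ[α]` is divisible by `(1+α)(1+2α)⋯(1+kα)`. -/
theorem stmt3 (n k : ℕ) (hk1 : 1 ≤ k) (hkn : k < n) (g h : Equiv.Perm (Fin n)) :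
    (∏ j ∈ Finset.Icc 1 k, (1 + (j : Polynomial ℤ) * Polynomial.X)) ∣
    ∑ w ∈ Finset.univ.filter (inSymSub n k),
      (Polynomial.X : Polynomial ℤ) ^ (n - permCycles (h * (g * w * g⁻¹))) :=
  stmt3_general n k hkn g h
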